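/- arXiv:1501.00363 — 7 statements merged into one kernel-verified Lean document; each statement's English description precedes it below -/
import Mathlib

section
/- Let d ≥ 2 and 0 ≤ k ≤ d−2 be integers, b > 0, and ν < 0. For β ≥ 0 define the series A(β) = Σ_{n∈ℕ^d} (Π_{i=1}^d β^{n_i}/n_i!) · exp(ν b^k C(n)), where C(n) = 1 + Σ_{∅≠F⊆{1,…,d}, |F|≤d−k} Π_{j∈F} n_j, and B(β) = Σ_{n∈ℕ^d} (Π_{i=1}^d β^{n_i}/n_i!) · exp(ν (2b)^k Σ_{S⊆{1,…,d}, |S|=d−k} Π_{i∈S} n_i). Then lim_{β→∞} β^{d−k} · A(β)/B(β) = 0. -/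
open Filter Finset Real
open scoped Nat Topology

/-!
Putting all of `n` on one coordinate kills every product over `d - k ≥ 2` indices, so
`B(β) ≥ ∑ₘ βᵐ/m! = e^β`. The exponent `C(n)` of `A` contains all singletons and pairs, so as soon as
some `nᵢ > L` the factor `exp (ν bᵏ C(n))` is at most `q^{nᵢ} ∏_{j ≠ i} q^{(L+2) nⱼ}` with
`q = exp (ν bᵏ) < 1`. Summed against `∏ β^{nⱼ}/nⱼ!` these terms give at most `d exp (ρ β)` with
`ρ = q + d q^{L+2}`, which is `< 1` for `L` large. The remaining `n` lie in a finite box and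
contribute a polynomial in `β`. Hence `β^{d-k} A/B ≤ β^{d-k} (poly(β) + d e^{ρβ}) e^{-β} → 0`.
-/

section Combinatorics

variable {ι : Type*}

theorem prod_eq_zero_of_one_lt_card_of_forall_ne {M₀ : Type*} [CommMonoidWithZero M₀]
    {S : Finset ι} (hS : 1 < S.card) {f : ι → M₀} {i : ι} (hf : ∀ j, j ≠ i → f j = 0) :
    ∏ j ∈ S, f j = 0 :=
  let ⟨j, hj, hji⟩ := S.exists_mem_ne hS i
  prod_eq_zero hj (hf j hji)

variable [Fintype ι] [DecidableEq ι]

theorem sum_add_sum_erase_mul_le_sum_filter_card_le {m : ℕ} (hm : 2 ≤ m) {x : ι → ℝ}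
    (hx : 0 ≤ x) (i : ι) :
    ∑ j, x j + ∑ j ∈ univ.erase i, x i * x j ≤
      ∑ F ∈ univ.powerset.filter (fun F => F.Nonempty ∧ F.card ≤ m), ∏ j ∈ F, x j := by
  have prod_nonneg (F : Finset ι) : 0 ≤ ∏ j ∈ F, x j := prod_nonneg fun j _ => hx j
  have singletons : ∑ F ∈ powersetCard 1 univ, ∏ j ∈ F, x j = ∑ j, x j := by
    simp [powersetCard_one]
  have pairs : ∑ j ∈ univ.erase i, x i * x j ≤ ∑ F ∈ powersetCard 2 univ, ∏ j ∈ F, x j := by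
    have pair_ne {j} (hj : j ∈ univ.erase i) : i ≠ j := (ne_of_mem_erase hj).symm
    calc ∑ j ∈ univ.erase i, x i * x j
        = ∑ F ∈ (univ.erase i).image (fun j => {i, j}), ∏ j ∈ F, x j := by
          rw [sum_image fun j hj l hl h => ?_]
          · exact sum_congr rfl fun j hj => (prod_pair (pair_ne hj)).symm
          · simpa [(pair_ne hj).symm] using (Finset.ext_iff.1 h j).1 (by simp)
      _ ≤ ∑ F ∈ powersetCard 2 univ, ∏ j ∈ F, x j := by
          refine sum_le_sum_of_subset_of_nonneg (fun F hF => ?_) fun F _ _ => prod_nonneg F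
          obtain ⟨j, hj, rfl⟩ := mem_image.1 hF
          exact mem_powersetCard.2 ⟨subset_univ _, card_pair (pair_ne hj)⟩
  calc ∑ j, x j + ∑ j ∈ univ.erase i, x i * x j
      ≤ ∑ F ∈ powersetCard 1 univ ∪ powersetCard 2 univ, ∏ j ∈ F, x j := by
        rw [sum_union (disjoint_left.2 fun F h1 h2 => by
          have := (mem_powersetCard.1 h1).2; have := (mem_powersetCard.1 h2).2; omega),
          singletons]
        gcongr
    _ ≤ _ := by
        refine sum_le_sum_of_subset_of_nonneg (fun F hF => ?_) fun F _ _ => prod_nonneg F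
        simp only [mem_union, mem_powersetCard] at hF
        simp only [mem_filter, mem_powerset, subset_univ, true_and, ← card_pos]
        omega

theorem add_mul_sum_erase_le_sum_filter_card_le {m : ℕ} (hm : 2 ≤ m) {x : ι → ℝ}
    (hx : 0 ≤ x) {i : ι} {L : ℕ} (hi : L + 1 ≤ x i) :
    x i + (L + 2) * ∑ j ∈ univ.erase i, x j ≤
      ∑ F ∈ univ.powerset.filter (fun F => F.Nonempty ∧ F.card ≤ m), ∏ j ∈ F, x j := by
  refine le_trans ?_ (sum_add_sum_erase_mul_le_sum_filter_card_le hm hx i)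
  rw [← add_sum_erase _ _ (mem_univ i), add_assoc, ← sum_add_distrib, mul_sum]
  gcongr with j
  linarith [mul_le_mul_of_nonneg_right hi (hx j)]

end Combinatorics

theorem hasSum_prod_pow_div_factorial {d : ℕ} (x : Fin d → ℝ) :
    HasSum (fun n : Fin d → ℕ => ∏ i, x i ^ n i / (n i)!) (exp (∑ i, x i)) := by
  induction d with
  | zero => simp
  | succ d ih =>
    have head : HasSum (fun m : ℕ => x 0 ^ m / m !) (exp (x 0)) := by
      rw [exp_eq_exp_ℝ]; exact NormedSpace.expSeries_div_hasSum_exp (x 0)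
    have head_norm : Summable fun m : ℕ => ‖x 0 ^ m / (m ! : ℝ)‖ :=
      NormedSpace.norm_expSeries_div_summable (x 0)
    have tail_norm : Summable fun n : Fin d → ℕ => ‖∏ i, x i.succ ^ n i / ((n i)! : ℝ)‖ := by
      simpa only [norm_prod, norm_div, norm_pow, Real.norm_eq_abs, RCLike.norm_natCast]
        using (ih fun i => |x i.succ|).summable
    have product_summable := summable_mul_of_summable_norm head_norm tail_norm
    have product := head.mul (ih fun i => x i.succ) product_summable
    rw [← (Fin.consEquiv fun _ => ℕ).hasSum_iff, Fin.sum_univ_succ, exp_add]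
    refine product.congr_fun fun p => ?_
    simp only [Function.comp_apply, Fin.consEquiv_apply, Fin.prod_univ_succ, Fin.cons_zero,
      Fin.cons_succ]

section ExponentialWeights

variable {d : ℕ} {β : ℝ}

theorem summable_prod_pow_div_factorial_mul_exp (hβ : 0 ≤ β) {h : (Fin d → ℕ) → ℝ}
    (h_nonpos : ∀ n, h n ≤ 0) :
    Summable fun n : Fin d → ℕ => (∏ j, β ^ n j / (n j)!) * exp (h n) :=
  (hasSum_prod_pow_div_factorial fun _ => β).summable.of_nonneg_of_le (fun n => by positivity)
    fun n => mul_le_of_le_one_right (by positivity) (exp_le_one_iff.2 (h_nonpos n))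

theorem exp_le_tsum_prod_pow_div_factorial_mul_exp (hβ : 0 ≤ β) {h : (Fin d → ℕ) → ℝ}
    (h_nonpos : ∀ n, h n ≤ 0) (i : Fin d) (h_single : ∀ m, h (Pi.single i m) = 0) :
    exp β ≤ ∑' n : Fin d → ℕ, (∏ j, β ^ n j / (n j)!) * exp (h n) := by
  set f := fun n : Fin d → ℕ => (∏ j, β ^ n j / (n j)!) * exp (h n)
  have on_axis (m : ℕ) : f (Pi.single i m) = β ^ m / m ! := by
    simp only [f]
    rw [h_single, exp_zero, mul_one, Fintype.prod_eq_single i fun j hj => by simp [hj]]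
    simp
  calc exp β = ∑' m : ℕ, β ^ m / m ! := by rw [exp_eq_exp_ℝ, NormedSpace.exp_eq_tsum_div]
    _ = ∑' m : ℕ, f (Pi.single i m) := (tsum_congr on_axis).symm
    _ ≤ ∑' n, f n :=
        tsum_comp_le_tsum_of_inj (summable_prod_pow_div_factorial_mul_exp hβ h_nonpos)
          (fun n => by positivity) (Pi.single_injective i)

theorem tsum_prod_pow_div_factorial_mul_exp_le (hβ : 0 ≤ β) {h : (Fin d → ℕ) → ℝ}
    (h_nonpos : ∀ n, h n ≤ 0) {L : ℕ} {s r : ℝ}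
    (h_le : ∀ n i, L < n i → h n ≤ s * n i + r * ∑ j ∈ univ.erase i, (n j : ℝ)) :
    ∑' n : Fin d → ℕ, (∏ j, β ^ n j / (n j)!) * exp (h n) ≤
      ∑ n ∈ Fintype.piFinset (fun _ : Fin d => range (L + 1)), ∏ j, β ^ n j / (n j)! +
        d * exp ((exp s + d * exp r) * β) := by
  set box := Fintype.piFinset fun _ : Fin d => range (L + 1)
  -- Off the box some `n i > L`, and `h_le` bounds the term by an exponential-series term
  -- with rates `y i`.
  let y (i j : Fin d) : ℝ := β * exp (if j = i then s else r)
  have pointwise (n : Fin d → ℕ) : (∏ j, β ^ n j / (n j)!) * exp (h n) ≤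
      (if n ∈ box then ∏ j, β ^ n j / (n j)! else 0) + ∑ i, ∏ j, y i j ^ n j / (n j)! := by
    by_cases hn : n ∈ box
    · rw [if_pos hn]
      exact le_add_of_le_of_nonneg
        (mul_le_of_le_one_right (by positivity) (exp_le_one_iff.2 (h_nonpos n))) (by positivity)
    obtain ⟨i, hi⟩ : ∃ i, L < n i := by simpa [box, Nat.lt_succ_iff] using hn
    rw [if_neg hn, zero_add]
    refine le_trans ?_ (single_le_sum (fun i _ => by positivity) (mem_univ i))
    have exponent : s * n i + r * ∑ j ∈ univ.erase i, (n j : ℝ) =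
        ∑ j, n j * (if j = i then s else r) := by
      simp only [mul_ite, sum_ite, filter_eq', filter_ne', mem_univ, if_true, sum_singleton,
        ← sum_mul]
      ring
    calc (∏ j, β ^ n j / (n j)!) * exp (h n)
        ≤ (∏ j, β ^ n j / (n j)!) * exp (∑ j, n j * (if j = i then s else r)) := by
          rw [← exponent]; gcongr; exact h_le n i hi
      _ = ∏ j, y i j ^ n j / (n j)! := by
          rw [exp_sum, ← prod_mul_distrib]
          refine prod_congr rfl fun j _ => ?_
          rw [exp_nat_mul, mul_pow]
          ring
  have rate (i : Fin d) : ∑ j, y i j ≤ (exp s + d * exp r) * β := by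
    calc ∑ j, y i j = β * ∑ j, exp (if j = i then s else r) := by rw [mul_sum]
      _ ≤ β * ∑ j, ((if j = i then exp s else 0) + exp r) := by
          gcongr with j; split_ifs <;> simp [exp_nonneg]
      _ = (exp s + d * exp r) * β := by simp [sum_add_distrib]; ring
  have box_hasSum : HasSum (fun n => if n ∈ box then ∏ j, β ^ n j / (n j)! else 0)
      (∑ n ∈ box, ∏ j, β ^ n j / (n j)!) := by
    simpa using hasSum_sum_of_ne_finset_zero (s := box)
      (f := fun n => if n ∈ box then ∏ j, β ^ n j / (n j)! else 0) fun n hn => if_neg hn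
  have tail_hasSum := hasSum_sum (s := univ) fun i _ => hasSum_prod_pow_div_factorial (y i)
  calc _ ≤ ∑ n ∈ box, ∏ j, β ^ n j / (n j)! + ∑ i, exp (∑ j, y i j) :=
        hasSum_le pointwise (summable_prod_pow_div_factorial_mul_exp hβ h_nonpos).hasSum
          (box_hasSum.add tail_hasSum)
    _ ≤ _ := by
        gcongr
        calc ∑ i, exp (∑ j, y i j) ≤ ∑ _i : Fin d, exp ((exp s + d * exp r) * β) :=
              sum_le_sum fun i _ => exp_le_exp.2 (rate i)
          _ = d * exp ((exp s + d * exp r) * β) := by simp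

end ExponentialWeights

theorem exists_exp_add_mul_exp_mul_lt_one {c : ℝ} (hc : c < 0) (D : ℝ) :
    ∃ L : ℕ, exp c + D * exp (c * (L + 2)) < 1 := by
  have h : Tendsto (fun L : ℕ => exp c + D * exp (c * (L + 2))) atTop (𝓝 (exp c + D * 0)) :=
    tendsto_const_nhds.add <| (tendsto_exp_atBot.comp <| Tendsto.const_mul_atTop_of_neg hc <|
      tendsto_natCast_atTop_atTop.atTop_add tendsto_const_nhds).const_mul D
  rw [mul_zero, add_zero] at h
  exact (h.eventually (gt_mem_nhds (exp_lt_one_iff.2 hc))).exists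

theorem tendsto_pow_mul_exp_mul_div_exp {ρ : ℝ} (hρ : ρ < 1) (p : ℕ) :
    Tendsto (fun β : ℝ => β ^ p * exp (ρ * β) / exp β) atTop (𝓝 0) :=
  (tendsto_rpow_mul_exp_neg_mul_atTop_nhds_zero p (1 - ρ) (by linarith)).congr fun β => by
    rw [rpow_natCast, mul_div_assoc, ← exp_sub]
    ring_nf

theorem tendsto_pow_mul_prod_pow_div_factorial_div_exp {d : ℕ} (p : ℕ) (n : Fin d → ℕ) :
    Tendsto (fun β : ℝ => β ^ p * (∏ j, β ^ n j / (n j)!) / exp β) atTop (𝓝 0) := by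
  have h := (tendsto_pow_mul_exp_mul_div_exp zero_lt_one (p + ∑ j, n j)).const_mul
    (∏ j, ((n j)! : ℝ)⁻¹)
  rw [mul_zero] at h
  refine h.congr fun β => ?_
  simp only [div_eq_mul_inv, prod_mul_distrib, prod_pow_eq_pow_sum, zero_mul, exp_zero, mul_one,
    pow_add]
  ring

theorem tendsto_pow_mul_sum_add_mul_exp_div_exp {d : ℕ} (p : ℕ) (s : Finset (Fin d → ℕ))
    (D : ℝ) {ρ : ℝ} (hρ : ρ < 1) :
    Tendsto (fun β : ℝ => β ^ p * (∑ n ∈ s, ∏ j, β ^ n j / (n j)! + D * exp (ρ * β)) / exp β)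
      atTop (𝓝 0) := by
  have h := (tendsto_finsetSum s fun n _ =>
    tendsto_pow_mul_prod_pow_div_factorial_div_exp p n).add
      ((tendsto_pow_mul_exp_mul_div_exp hρ p).const_mul D)
  rw [sum_const_zero, mul_zero, add_zero] at h
  refine h.congr fun β => ?_
  simp only [mul_add, add_div, mul_sum, sum_div]
  ring

/-- For the facet submodel series, `β^(d-k) * A(β)/B(β) → 0` as `β → ∞`. -/
theorem facet_correlation_vanishes
    (d k : ℕ) (hd : 2 ≤ d) (hk : k ≤ d - 2) (b ν : ℝ) (hb : 0 < b) (hν : ν < 0)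
    (A B : ℝ → ℝ)
    (hA : ∀ β : ℝ, A β =
      ∑' n : Fin d → ℕ,
        (∏ i, β ^ (n i) / ((n i).factorial : ℝ)) *
          Real.exp (ν * b ^ k *
            (1 + ∑ F ∈ Finset.univ.powerset.filter
                  (fun F : Finset (Fin d) => F.Nonempty ∧ F.card ≤ d - k),
                ∏ j ∈ F, (n j : ℝ))))
    (hB : ∀ β : ℝ, B β =
      ∑' n : Fin d → ℕ,
        (∏ i, β ^ (n i) / ((n i).factorial : ℝ)) *
          Real.exp (ν * (2 * b) ^ k *
            ∑ S ∈ Finset.univ.powerset.filter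
                  (fun S : Finset (Fin d) => S.card = d - k),
              ∏ i ∈ S, (n i : ℝ))) :
    Tendsto (fun β : ℝ => β ^ (d - k) * (A β / B β)) atTop (nhds 0) := by
  have hm : 2 ≤ d - k := by omega
  set c := ν * b ^ k
  have hc : c < 0 := mul_neg_of_neg_of_pos hν (pow_pos hb k)
  obtain ⟨L, hL⟩ := exists_exp_add_mul_exp_mul_lt_one hc d
  have A_le (β : ℝ) (hβ : 0 ≤ β) : A β ≤
      ∑ n ∈ Fintype.piFinset (fun _ : Fin d => range (L + 1)), ∏ j, β ^ n j / (n j)! +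
        d * exp ((exp c + d * exp (c * (L + 2))) * β) := by
    rw [hA β]
    refine tsum_prod_pow_div_factorial_mul_exp_le hβ
      (fun n => mul_nonpos_of_nonpos_of_nonneg hc.le (by positivity)) fun n i hi => ?_
    have singles_and_pairs := add_mul_sum_erase_le_sum_filter_card_le hm
      (x := fun j => (n j : ℝ)) (fun j => Nat.cast_nonneg _) (L := L) (by exact_mod_cast hi)
    linarith [mul_le_mul_of_nonpos_left
      (singles_and_pairs.trans (le_add_of_nonneg_left zero_le_one)) hc.le]
  have i₀ : Fin d := ⟨0, by omega⟩
  have exp_le_B (β : ℝ) (hβ : 0 ≤ β) : exp β ≤ B β := by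
    rw [hB β]
    refine exp_le_tsum_prod_pow_div_factorial_mul_exp hβ
      (fun n => mul_nonpos_of_nonpos_of_nonneg (mul_neg_of_neg_of_pos hν (by positivity)).le
        (by positivity)) i₀ fun m => ?_
    rw [sum_eq_zero fun S hS => prod_eq_zero_of_one_lt_card_of_forall_ne (i := i₀)
      (by rw [(mem_filter.1 hS).2]; omega) fun j hj => by simp [hj], mul_zero]
  refine squeeze_zero' ?_ ?_ (tendsto_pow_mul_sum_add_mul_exp_div_exp (d - k)
    (Fintype.piFinset fun _ : Fin d => range (L + 1)) d hL)
  · filter_upwards [eventually_ge_atTop 0] with β hβ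
    have A_nonneg : 0 ≤ A β := by rw [hA β]; exact tsum_nonneg fun n => by positivity
    have B_pos : 0 < B β := (exp_pos β).trans_le (exp_le_B β hβ)
    exact mul_nonneg (by positivity) (div_nonneg A_nonneg B_pos.le)
  · filter_upwards [eventually_ge_atTop 0] with β hβ
    rw [mul_div_assoc]
    exact mul_le_mul_of_nonneg_left
      (div_le_div₀ (by positivity) (A_le β hβ) (exp_pos β) (exp_le_B β hβ)) (by positivity)
end

section
/- Let d ≥ 2 and 0 ≤ k ≤ d−2 be integers, b > 0, and ν < 0. For β ≥ 0 define A(β) = Σ_{n∈ℕ^d} (Π_{i=1}^d β^{n_i}/n_i!) · exp(ν b^k C(n)), where C(n) = 1 + Σ_{∅≠F⊆{1,…,d}, |F|≤d−k} Π_{j∈F} n_j, and B(β) = Σ_{n∈ℕ^d} (Π_{i=1}^d β^{n_i}/n_i!) · exp(ν (2b)^k Σ_{S⊆{1,…,d}, |S|=d−k} Π_{i∈S} n_i). Then there exist a constant R < 0 and β₀ ≥ 0 such that A(β)/B(β) ≤ e^{Rβ} for all β ≥ β₀. -/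
/-!
Put `x = ν bᵏ < 0` and `c = eˣ < 1`. Restricting the series for `B` to multi-indices supported
on a single coordinate kills every product over a set of size `d - k ≥ 2`, so `B(β) ≥ e^β`.
For `A`, let `j` be a largest coordinate of `n`. The sets `{i, j}`, of size at most `2 ≤ d - k`,
already give `C(n) ≥ n_j (1 + ∑_{i ≠ j} n_i) ≥ n_j + L ∑_{i ≠ j} n_i - d L²`, so the summand of
`A` is at most `e^{-x d L²}` times the `n`-th term of the expansion of `exp (β (c + ∑_{i ≠ j} cᴸ))`.
Summing over `n` and `j` gives `A(β) ≤ K e^{θβ}` with `θ = c + d cᴸ`, which is `< 1` once `L`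
is large, hence `A(β) / B(β) ≤ K e^{(θ - 1)β} ≤ e^{(θ - 1)β / 2}` for large `β`.
-/

open Finset Real
open scoped Nat

theorem hasSum_fin_pi_prod {κ : Type*} {d : ℕ} {f : Fin d → κ → ℝ} {a : Fin d → ℝ}
    (hf : ∀ i m, 0 ≤ f i m) (ha : ∀ i, HasSum (f i) (a i)) :
    HasSum (fun n : Fin d → κ => ∏ i, f i (n i)) (∏ i, a i) := by
  induction d with
  | zero => simp
  | succ d ih =>
    have htail :
        HasSum (fun n : Fin d → κ => ∏ i : Fin d, f i.succ (n i)) (∏ i : Fin d, a i.succ) :=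
      ih (f := fun i => f i.succ) (a := fun i => a i.succ) (fun i => hf i.succ) fun i => ha i.succ
    have hhead : Summable (f 0) := (ha 0).summable
    have htail_nonneg : ∀ n : Fin d → κ, 0 ≤ ∏ i : Fin d, f i.succ (n i) :=
      fun _ => prod_nonneg fun _ _ => hf _ _
    have hsummable := Summable.mul_of_nonneg (f := f 0)
      (g := fun n : Fin d → κ => ∏ i : Fin d, f i.succ (n i)) hhead htail.summable (hf 0)
      htail_nonneg
    have hprod := (ha 0).mul htail hsummable
    have hcons : (fun n : Fin (d + 1) → κ => ∏ i, f i (n i)) ∘ (Fin.consEquiv fun _ => κ) =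
        fun p => f 0 p.1 * ∏ i : Fin d, f i.succ (p.2 i) := by
      funext p
      simp [Fin.consEquiv, Fin.prod_univ_succ]
    rw [Fin.prod_univ_succ, ← (Fin.consEquiv fun _ => κ).hasSum_iff, hcons]
    exact hprod

section ExpTerm

variable {d : ℕ}

noncomputable def expTerm (a : Fin d → ℝ) (n : Fin d → ℕ) : ℝ := ∏ i, a i ^ n i / (n i)!

theorem expTerm_nonneg {a : Fin d → ℝ} (ha : 0 ≤ a) (n : Fin d → ℕ) : 0 ≤ expTerm a n :=
  prod_nonneg fun i _ => div_nonneg (pow_nonneg (ha i) _) (Nat.cast_nonneg _)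

theorem hasSum_pow_div_factorial (x : ℝ) : HasSum (fun m => x ^ m / m !) (exp x) := by
  rw [exp_eq_exp_ℝ]
  exact NormedSpace.expSeries_div_hasSum_exp x

theorem hasSum_expTerm {a : Fin d → ℝ} (ha : 0 ≤ a) : HasSum (expTerm a) (exp (∑ i, a i)) := by
  rw [exp_sum]
  refine hasSum_fin_pi_prod (f := fun i m => a i ^ m / m !)
    (fun i m => div_nonneg (pow_nonneg (ha i) _) (Nat.cast_nonneg _))
    fun i => hasSum_pow_div_factorial (a i)

theorem expTerm_mul (γ a : Fin d → ℝ) (n : Fin d → ℕ) :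
    expTerm (fun i => γ i * a i) n = (∏ i, γ i ^ n i) * expTerm a n := by
  simp only [expTerm, mul_pow, mul_div_assoc, prod_mul_distrib]

theorem expTerm_single (a : Fin d → ℝ) (j : Fin d) (m : ℕ) :
    expTerm a (Pi.single j m) = a j ^ m / m ! :=
  (Fintype.prod_eq_single j fun i hi => by simp [hi]).trans (by simp)

end ExpTerm

section Combinatorics

variable {ι : Type*} [Fintype ι] [DecidableEq ι]

theorem mul_add_sum_le_sum_prod {s : Finset (Finset ι)} (hs : ∀ i j, {i, j} ∈ s) {f : ι → ℝ}
    (hf : 0 ≤ f) (j : ι) : f j * (1 + ∑ i ∈ univ.erase j, f i) ≤ ∑ F ∈ s, ∏ l ∈ F, f l := by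
  have hinj : Set.InjOn (fun i => ({i, j} : Finset ι)) (univ : Finset ι) := by
    intro i _ i' _ h
    simp only [Finset.ext_iff, mem_insert, mem_singleton] at h
    rcases (h i).1 (.inl rfl) with h1 | h1
    · exact h1
    · rcases (h i').2 (.inl rfl) with h2 | h2
      · exact h2.symm
      · exact h1.trans h2.symm
  calc f j * (1 + ∑ i ∈ univ.erase j, f i) = ∑ i, ∏ l ∈ {i, j}, f l := by
        rw [← add_sum_erase _ _ (mem_univ j), mul_add, mul_one, mul_sum]
        congr 1
        · simp
        · exact sum_congr rfl fun i hi => by rw [prod_pair (ne_of_mem_erase hi), mul_comm]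
    _ = ∑ F ∈ univ.image fun i => ({i, j} : Finset ι), ∏ l ∈ F, f l := by rw [sum_image hinj]
    _ ≤ ∑ F ∈ s, ∏ l ∈ F, f l :=
        sum_le_sum_of_subset_of_nonneg (by simpa [subset_iff] using fun i => hs i j)
          fun F _ _ => prod_nonneg fun l _ => hf l

theorem mul_le_mul_add_sq {L a b : ℝ} (ha : 0 ≤ a) (hab : a ≤ b) : L * a ≤ b * a + L ^ 2 := by
  rcases le_total a L with h | h
  · nlinarith
  · nlinarith

theorem sum_ite_mul_le {f : ι → ℝ} (hf : 0 ≤ f) {j : ι} (hj : ∀ i, f i ≤ f j) (L : ℝ) :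
    ∑ i, (if i = j then 1 else L) * f i ≤
      f j * (1 + ∑ i ∈ univ.erase j, f i) + Fintype.card ι * L ^ 2 := by
  rw [← add_sum_erase _ _ (mem_univ j), if_pos rfl, one_mul, mul_add, mul_one, mul_sum]
  calc f j + ∑ i ∈ univ.erase j, (if i = j then 1 else L) * f i
      ≤ f j + ∑ i ∈ univ.erase j, (f j * f i + L ^ 2) := by
        gcongr with i hi
        rw [if_neg (ne_of_mem_erase hi)]
        exact mul_le_mul_add_sq (hf i) (hj i)
    _ ≤ f j + ∑ i ∈ univ.erase j, f j * f i + ∑ _i : ι, (L ^ 2 : ℝ) := by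
        rw [sum_add_distrib, ← add_assoc]
        exact add_le_add_right (sum_le_sum_of_subset_of_nonneg (subset_univ (univ.erase j))
          fun _ _ _ => sq_nonneg L) _
    _ = _ := by simp

theorem exp_mul_one_add_sum_prod_le [Nonempty ι] {s : Finset (Finset ι)} (hs : ∀ i j, {i, j} ∈ s)
    {x : ℝ} (hx : x ≤ 0) (L : ℕ) (n : ι → ℕ) :
    exp (x * (1 + ∑ F ∈ s, ∏ l ∈ F, (n l : ℝ))) ≤
      exp (-x * (Fintype.card ι * L ^ 2)) *
        ∑ j, ∏ i, (if i = j then exp x else exp x ^ L) ^ n i := by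
  obtain ⟨j, hj⟩ := Finite.exists_max n
  have hweight : ∏ i, (if i = j then exp x else exp x ^ L) ^ n i =
      exp (x * ∑ i, (if i = j then 1 else (L : ℝ)) * n i) := by
    rw [mul_sum, exp_sum]
    refine prod_congr rfl fun i _ => ?_
    split_ifs
    · rw [← exp_nat_mul, one_mul, mul_comm]
    · rw [← pow_mul, ← exp_nat_mul]
      push_cast
      ring_nf
  have hcomb : ∑ i, (if i = j then 1 else (L : ℝ)) * n i ≤
      ∑ F ∈ s, ∏ l ∈ F, (n l : ℝ) + Fintype.card ι * L ^ 2 :=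
    (sum_ite_mul_le (fun i => Nat.cast_nonneg (n i)) (fun i => Nat.cast_le.mpr (hj i)) L).trans
      (add_le_add_left (mul_add_sum_le_sum_prod hs (fun i => Nat.cast_nonneg (n i)) j) _)
  calc exp (x * (1 + ∑ F ∈ s, ∏ l ∈ F, (n l : ℝ)))
      ≤ exp (-x * (Fintype.card ι * L ^ 2) + x * ∑ i, (if i = j then 1 else (L : ℝ)) * n i) := by
        have := mul_le_mul_of_nonpos_left hcomb hx
        exact exp_le_exp.mpr (by linarith)
    _ ≤ _ := by
        rw [exp_add, ← hweight]
        refine mul_le_mul_of_nonneg_left (single_le_sum (s := univ)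
          (f := fun j => ∏ i, (if i = j then exp x else exp x ^ L) ^ n i) (fun j _ => ?_)
          (mem_univ j)) (exp_pos _).le
        exact prod_nonneg fun i _ => pow_nonneg (by split_ifs <;> positivity) _

end Combinatorics

section Series

variable {d : ℕ}

theorem tsum_expTerm_mul_exp_le {s : Finset (Finset (Fin d))} (hs : ∀ i j, {i, j} ∈ s)
    (hd : 0 < d) {x β : ℝ} (hx : x ≤ 0) (hβ : 0 ≤ β) (L : ℕ) :
    ∑' n, expTerm (fun _ => β) n * exp (x * (1 + ∑ F ∈ s, ∏ l ∈ F, (n l : ℝ))) ≤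
      exp (-x * (d * L ^ 2)) * d * exp ((exp x + d * exp x ^ L) * β) := by
  have : Nonempty (Fin d) := ⟨⟨0, hd⟩⟩
  set K := exp (-x * (d * L ^ 2))
  set γ : Fin d → Fin d → ℝ := fun j i => if i = j then exp x else exp x ^ L
  have hγ : ∀ j i, 0 ≤ γ j i := fun j i => by simp only [γ]; split_ifs <;> positivity
  have hγsum : ∀ j, ∑ i, γ j i ≤ exp x + d * exp x ^ L := by
    intro j
    calc ∑ i, γ j i ≤ ∑ i, ((if j = i then exp x else 0) + exp x ^ L) := by
          refine sum_le_sum fun i _ => ?_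
          simp only [γ, eq_comm (a := i)]
          split_ifs <;> simp [(exp_pos x).le]
      _ = exp x + d * exp x ^ L := by simp [sum_add_distrib]
  have hterm_nonneg :
      ∀ n, 0 ≤ expTerm (fun _ => β) n * exp (x * (1 + ∑ F ∈ s, ∏ l ∈ F, (n l : ℝ))) :=
    fun n => mul_nonneg (expTerm_nonneg (fun _ => hβ) n) (exp_pos _).le
  have hterm_le : ∀ n, expTerm (fun _ => β) n * exp (x * (1 + ∑ F ∈ s, ∏ l ∈ F, (n l : ℝ))) ≤
      K * ∑ j, expTerm (fun i => γ j i * β) n := by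
    intro n
    calc _ ≤ expTerm (fun _ => β) n * (K * ∑ j, ∏ i, γ j i ^ n i) := by
          refine mul_le_mul_of_nonneg_left ?_ (expTerm_nonneg (fun _ => hβ) n)
          have := exp_mul_one_add_sum_prod_le hs hx L n
          rwa [Fintype.card_fin] at this
      _ = K * ∑ j, expTerm (fun i => γ j i * β) n := by
          simp only [expTerm_mul, ← sum_mul]
          ring
  have hmajorant := (hasSum_sum (s := univ) fun j _ =>
    hasSum_expTerm fun i => mul_nonneg (hγ j i) hβ).mul_left K
  have hsummable := Summable.of_nonneg_of_le hterm_nonneg hterm_le hmajorant.summable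
  calc _ ≤ K * ∑ j, exp (∑ i, γ j i * β) := hasSum_le hterm_le hsummable.hasSum hmajorant
    _ ≤ K * ∑ _j : Fin d, exp ((exp x + d * exp x ^ L) * β) := by
        gcongr with j
        rw [← sum_mul]
        exact mul_le_mul_of_nonneg_right (hγsum j) hβ
    _ = K * d * exp ((exp x + d * exp x ^ L) * β) := by simp [mul_assoc]

theorem exp_le_tsum_expTerm_mul_exp {s : Finset (Finset (Fin d))} (hs : ∀ S ∈ s, 1 < S.card)
    (i₀ : Fin d) {y β : ℝ} (hy : y ≤ 0) (hβ : 0 ≤ β) :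
    exp β ≤ ∑' n, expTerm (fun _ => β) n * exp (y * ∑ S ∈ s, ∏ i ∈ S, (n i : ℝ)) := by
  set g := fun n : Fin d → ℕ => expTerm (fun _ => β) n * exp (y * ∑ S ∈ s, ∏ i ∈ S, (n i : ℝ))
  have hg_nonneg : ∀ n, 0 ≤ g n :=
    fun n => mul_nonneg (expTerm_nonneg (fun _ => hβ) n) (exp_pos _).le
  have hg_le : ∀ n, g n ≤ expTerm (fun _ => β) n := fun n =>
    mul_le_of_le_one_right (expTerm_nonneg (fun _ => hβ) n) <| exp_le_one_iff.mpr <|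
      mul_nonpos_of_nonpos_of_nonneg hy <|
        sum_nonneg fun S _ => prod_nonneg fun i _ => Nat.cast_nonneg _
  have hg_single : ∀ m, g (Pi.single i₀ m) = β ^ m / m ! := by
    intro m
    have hvanish : ∀ S ∈ s, ∏ i ∈ S, ((Pi.single i₀ m : Fin d → ℕ) i : ℝ) = 0 := by
      intro S hS
      obtain ⟨i, hi, hne⟩ := exists_mem_ne (hs S hS) i₀
      exact prod_eq_zero hi (by simp [hne])
    simp [g, sum_eq_zero hvanish, expTerm_single]
  calc exp β = ∑' m, g (Pi.single i₀ m) := by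
        simp_rw [hg_single]
        exact (hasSum_pow_div_factorial β).tsum_eq.symm
    _ ≤ ∑' n, g n := tsum_comp_le_tsum_of_inj
        (Summable.of_nonneg_of_le hg_nonneg hg_le (hasSum_expTerm fun _ => hβ).summable)
        hg_nonneg (Pi.single_injective i₀)

end Series

theorem exists_div_le_exp_mul_of_le {f g : ℝ → ℝ} {K θ : ℝ} (hK : 0 ≤ K) (hθ : θ < 1)
    (hf : ∀ β, 0 ≤ β → f β ≤ K * exp (θ * β)) (hg : ∀ β, 0 ≤ β → exp β ≤ g β) :
    ∃ R < 0, ∃ β₀, 0 ≤ β₀ ∧ ∀ β, β₀ ≤ β → f β / g β ≤ exp (R * β) := by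
  set R := (θ - 1) / 2
  have hR : R < 0 := by simp only [R]; linarith
  refine ⟨R, hR, K / -R, div_nonneg hK (by linarith), fun β hβ => ?_⟩
  have hβ0 : 0 ≤ β := (div_nonneg hK (by linarith)).trans hβ
  have hK_le : K ≤ exp (-R * β) := by
    have := (div_le_iff₀ (neg_pos.mpr hR)).mp hβ
    linarith [add_one_le_exp (-R * β)]
  calc f β / g β ≤ K * exp (θ * β) / exp β :=
        div_le_div₀ (by positivity) (hf β hβ0) (exp_pos β) (hg β hβ0)
    _ = K * exp (2 * R * β) := by
        rw [mul_div_assoc, ← exp_sub]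
        congr 2
        simp only [R]
        ring
    _ ≤ exp (-R * β) * exp (2 * R * β) := by gcongr
    _ = exp (R * β) := by
        rw [← exp_add]
        ring_nf

/-- There exist `R < 0` and `β₀ ≥ 0` with `A(β)/B(β) ≤ exp(Rβ)` for `β ≥ β₀`. -/
theorem facet_correlation_exponential_bound
    (d k : ℕ) (hd : 2 ≤ d) (hk : k ≤ d - 2) (b ν : ℝ) (hb : 0 < b) (hν : ν < 0)
    (A B : ℝ → ℝ)
    (hA : ∀ β : ℝ, A β =
      ∑' n : Fin d → ℕ,
        (∏ i, β ^ (n i) / ((n i).factorial : ℝ)) *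
          Real.exp (ν * b ^ k *
            (1 + ∑ F ∈ Finset.univ.powerset.filter
                  (fun F : Finset (Fin d) => F.Nonempty ∧ F.card ≤ d - k),
                ∏ j ∈ F, (n j : ℝ))))
    (hB : ∀ β : ℝ, B β =
      ∑' n : Fin d → ℕ,
        (∏ i, β ^ (n i) / ((n i).factorial : ℝ)) *
          Real.exp (ν * (2 * b) ^ k *
            ∑ S ∈ Finset.univ.powerset.filter
                  (fun S : Finset (Fin d) => S.card = d - k),
              ∏ i ∈ S, (n i : ℝ))) :
    ∃ R : ℝ, R < 0 ∧ ∃ β₀ : ℝ, 0 ≤ β₀ ∧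
      ∀ β : ℝ, β₀ ≤ β → A β / B β ≤ Real.exp (R * β) := by
  have hx : ν * b ^ k < 0 := mul_neg_of_neg_of_pos hν (pow_pos hb k)
  have hc : exp (ν * b ^ k) < 1 := exp_lt_one_iff.mpr hx
  obtain ⟨L, hL⟩ : ∃ L : ℕ, exp (ν * b ^ k) + d * exp (ν * b ^ k) ^ L < 1 := by
    obtain ⟨L, hL⟩ := exists_pow_lt_of_lt_one
      (div_pos (sub_pos.mpr hc) (by positivity : (0 : ℝ) < d)) hc
    refine ⟨L, ?_⟩
    rw [lt_div_iff₀ (by positivity)] at hL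
    linarith
  have hpairs : ∀ i j : Fin d,
      {i, j} ∈ univ.powerset.filter fun F : Finset (Fin d) => F.Nonempty ∧ F.card ≤ d - k :=
    fun i j => by simpa using card_le_two.trans (by omega)
  have hcard : ∀ S ∈ univ.powerset.filter fun S : Finset (Fin d) => S.card = d - k, 1 < S.card :=
    fun S hS => by simp only [mem_filter] at hS; omega
  refine exists_div_le_exp_mul_of_le (K := exp (-(ν * b ^ k) * (d * L ^ 2)) * d) (by positivity)
    hL (fun β hβ => ?_) (fun β hβ => ?_)
  · rw [hA]
    exact tsum_expTerm_mul_exp_le hpairs (by omega) hx.le hβ L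
  · rw [hB]
    exact exp_le_tsum_expTerm_mul_exp hcard ⟨0, by omega⟩
      (mul_nonpos_of_nonpos_of_nonneg hν.le (by positivity)) hβ
end

section
/- Let d ≥ 2 and 0 ≤ k ≤ d−2 be integers, c ≤ 0 a real number, and β ≥ 0. Then Σ_{n∈ℕ^d} (Π_{i=1}^d β^{n_i}/n_i!) · exp(c · Σ_{S⊆{1,…,d}, |S|=d−k} Π_{i∈S} n_i) ≥ exp(β(d−k−1)), where the inner sum ranges over all subsets S of {1,…,d} of cardinality d−k. -/
/-!
All terms are nonnegative, so the series is at least its sub-series over the `n` supported on a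
fixed set `T` of `d - k - 1` coordinates. Every `S` of size `d - k` meets the complement of `T`,
so on that sub-series the exponent vanishes, and what is left factorises into `d - k - 1` copies
of `∑ β ^ m / m! = exp β`.
-/

open Finset Filter Topology

theorem hasSum_pi_prod_of_nonneg {ι κ : Type*} [Fintype ι] {f : ι → κ → ℝ} {a : ι → ℝ}
    (hf0 : ∀ i k, 0 ≤ f i k) (hf : ∀ i, HasSum (f i) (a i)) :
    HasSum (fun n : ι → κ => ∏ i, f i (n i)) (∏ i, a i) := by
  classical
  have cube_sum (t : Finset κ) :
      ∑ n ∈ Fintype.piFinset fun _ => t, ∏ i, f i (n i) = ∏ i, ∑ k ∈ t, f i k :=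
    (prod_univ_sum _ _).symm
  have subset_cube (s : Finset (ι → κ)) :
      s ⊆ Fintype.piFinset fun _ => univ.biUnion fun i => s.image (· i) := fun n hn =>
    Fintype.mem_piFinset.2 fun i => mem_biUnion.2 ⟨i, mem_univ _, mem_image_of_mem _ hn⟩
  have summable : Summable fun n : ι → κ => ∏ i, f i (n i) := by
    refine summable_of_sum_le (c := ∏ i, a i)
      (fun n => prod_nonneg fun i _ => hf0 i (n i)) fun s => ?_
    calc ∑ n ∈ s, ∏ i, f i (n i)
        ≤ ∑ n ∈ Fintype.piFinset fun _ => univ.biUnion fun i => s.image (· i), ∏ i, f i (n i) :=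
          sum_le_sum_of_subset_of_nonneg (subset_cube s)
            fun n _ _ => prod_nonneg fun i _ => hf0 i (n i)
      _ ≤ ∏ i, a i := by
          rw [cube_sum]
          exact prod_le_prod (fun i _ => sum_nonneg fun k _ => hf0 i k)
            fun i _ => sum_le_hasSum _ (fun k _ => hf0 i k) (hf i)
  have cubes_cofinal : Tendsto (fun t : Finset κ => Fintype.piFinset fun _ : ι => t) atTop atTop :=
    tendsto_atTop_atTop_of_monotone (fun _ _ hst => Fintype.piFinset_subset _ _ fun _ => hst)
      fun s => ⟨_, subset_cube s⟩
  have cube_sums_tendsto : Tendsto (fun t : Finset κ => ∏ i, ∑ k ∈ t, f i k) atTop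
      (𝓝 (∏ i, a i)) :=
    tendsto_finsetProd _ fun i _ => hf i
  have cube_sums_tendsto_tsum : Tendsto (fun t : Finset κ => ∏ i, ∑ k ∈ t, f i k) atTop
      (𝓝 (∑' n : ι → κ, ∏ i, f i (n i))) := by
    simp_rw [← cube_sum]
    exact summable.hasSum.comp cubes_cofinal
  rw [tendsto_nhds_unique cube_sums_tendsto cube_sums_tendsto_tsum]
  exact summable.hasSum

theorem sum_powerset_card_eq_prod_eq_zero {ι R : Type*} [Fintype ι] [CommSemiring R]
    {T : Finset ι} {r : ℕ} (hT : #T < r) {x : ι → R} (hx : ∀ i ∉ T, x i = 0) :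
    ∑ S ∈ univ.powerset.filter (fun S : Finset ι => #S = r), ∏ i ∈ S, x i = 0 :=
  sum_eq_zero fun S hS => by
    obtain ⟨i, hiS, hiT⟩ :=
      exists_mem_notMem_of_card_lt_card (hT.trans_eq (mem_filter.1 hS).2.symm)
    exact prod_eq_zero hiS (hx i hiT)

theorem exp_mul_sum_powerset_card_prod_le_one {ι : Type*} [Fintype ι] {c : ℝ} (hc : c ≤ 0)
    (r : ℕ) (n : ι → ℕ) :
    Real.exp (c * ∑ S ∈ univ.powerset.filter (fun S : Finset ι => #S = r), ∏ i ∈ S, (n i : ℝ))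
      ≤ 1 :=
  Real.exp_le_one_iff.2 <| mul_nonpos_of_nonpos_of_nonneg hc <|
    sum_nonneg fun _ _ => prod_nonneg fun i _ => Nat.cast_nonneg (n i)

/-- The point mass at `0` on the coordinates outside `T` restricts the series to the `n`
supported in `T`. -/
theorem prod_ite_mem_pi_single_le_mul_exp {ι : Type*} [Fintype ι] [DecidableEq ι]
    {T : Finset ι} {r : ℕ} (hT : #T < r) {f : ℕ → ℝ} (hf0 : ∀ m, 0 ≤ f m) (hf1 : f 0 = 1)
    (c : ℝ) (n : ι → ℕ) :
    ∏ i, (if i ∈ T then f else Pi.single 0 1) (n i) ≤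
      (∏ i, f (n i)) *
        Real.exp (c * ∑ S ∈ univ.powerset.filter (fun S : Finset ι => #S = r),
          ∏ i ∈ S, (n i : ℝ)) := by
  by_cases hn : ∀ i ∉ T, n i = 0
  · have weight_eq (i : ι) : (if i ∈ T then f else Pi.single 0 1) (n i) = f (n i) := by
      by_cases hi : i ∈ T
      · simp [hi]
      · simp [hi, hn i hi, hf1]
    rw [prod_congr rfl fun i _ => weight_eq i,
      sum_powerset_card_eq_prod_eq_zero hT (x := fun i => (n i : ℝ)) (by simpa using hn)]
    simp
  · obtain ⟨i, hiT, hni⟩ := not_forall₂.1 hn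
    rw [prod_eq_zero (mem_univ i) (by simp [hiT, hni])]
    exact mul_nonneg (prod_nonneg fun i _ => hf0 _) (Real.exp_pos _).le

/-- Lower bound `exp(β(d-k-1))` for the normalizing series of the facet
submodel of order `d-k`. -/
theorem facet_normalizing_series_lower_bound
    (d k : ℕ) (hd : 2 ≤ d) (hk : k ≤ d - 2) (c : ℝ) (hc : c ≤ 0) (β : ℝ) (hβ : 0 ≤ β) :
    Real.exp (β * ((d : ℝ) - k - 1)) ≤
      ∑' n : Fin d → ℕ,
        (∏ i, β ^ (n i) / ((n i).factorial : ℝ)) *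
          Real.exp (c *
            ∑ S ∈ Finset.univ.powerset.filter (fun S : Finset (Fin d) => S.card = d - k),
              ∏ i ∈ S, (n i : ℝ)) := by
  set f : ℕ → ℝ := fun m => β ^ m / (m.factorial : ℝ)
  have hf0 (m : ℕ) : 0 ≤ f m := by positivity
  have hf : HasSum f (Real.exp β) := Real.exp_eq_exp_ℝ ▸ NormedSpace.expSeries_div_hasSum_exp β
  obtain ⟨T, -, hT⟩ := (univ : Finset (Fin d)).exists_subset_card_eq (n := d - k - 1)
    (by simp only [card_univ, Fintype.card_fin]; omega)
  have hw (i : Fin d) :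
      HasSum (if i ∈ T then f else Pi.single 0 1) (if i ∈ T then Real.exp β else 1) := by
    split_ifs
    exacts [hf, hasSum_pi_single 0 1]
  have hw0 (i : Fin d) (m : ℕ) : 0 ≤ (if i ∈ T then f else Pi.single 0 1) m := by
    split_ifs
    exacts [hf0 m, (Pi.single_nonneg (α := fun _ : ℕ => ℝ)).2 zero_le_one m]
  have summable := (hasSum_pi_prod_of_nonneg (fun _ => hf0) fun _ => hf).summable.of_nonneg_of_le
    (fun n : Fin d → ℕ => mul_nonneg (prod_nonneg fun i _ => hf0 _) (Real.exp_pos _).le)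
    fun n : Fin d → ℕ => mul_le_of_le_one_right (prod_nonneg fun i _ => hf0 _)
      (exp_mul_sum_powerset_card_prod_le_one hc (d - k) n)
  calc Real.exp (β * ((d : ℝ) - k - 1))
      = ∏ i, if i ∈ T then Real.exp β else 1 := by
        rw [prod_ite_mem, univ_inter, prod_const, hT, ← Real.exp_nat_mul,
          Nat.cast_sub (by omega), Nat.cast_sub (by omega), mul_comm]
        simp
    _ ≤ _ := hasSum_le (prod_ite_mem_pi_single_le_mul_exp (by omega) hf0 (by simp [f]) c)
        (hasSum_pi_prod_of_nonneg hw0 hw) summable.hasSum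
end

section
/- Let m ≥ 2 be an integer and ν < 0. Then lim_{a→∞} Σ_{n∈ℕ^m, n_i ≥ ⌈√a⌉ for all i} (Π_{i=1}^m a^{n_i}/n_i!) · exp(a·e^{ν·n_1⋯n_m} − a·m) = 1. -/
/-!
Put `N = ⌈√a⌉`. On the region every index has `∏ nᵢ ≥ N ^ m ≥ N ^ 2 ≥ a`, so the factor
`exp (a e^{ν ∏ nᵢ})` lies between `1` and `exp (a e^{ν a}) → 1`. What remains are products of
Poisson(`a`) probabilities, summing to `T ^ m` with `T` the Poisson(`a`) mass on `[N, ∞)`; and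
`T → 1` because comparing `aⁿ / n!` with `2 ^ N (a / 2)ⁿ / n!` bounds the mass below `N` by
`exp (N - a / 2) ≤ exp (2 - a / 4)`.
-/

open Filter Topology Finset Real
open scoped Nat

theorem hasSum_prod_fin_of_nonneg {α : Type*} {f : α → ℝ} {s : ℝ} (hf : HasSum f s)
    (hf0 : 0 ≤ f) (k : ℕ) : HasSum (fun x : Fin k → α => ∏ i, f (x i)) (s ^ k) := by
  induction k with
  | zero => simp
  | succ k ih =>
    have hprod_nonneg : 0 ≤ fun x : Fin k → α => ∏ i, f (x i) := fun x =>
      prod_nonneg fun i _ => hf0 (x i)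
    have hsummable := hf.summable.mul_of_nonneg ih.summable hf0 hprod_nonneg
    have hcons : (fun x : Fin (k + 1) → α => ∏ i, f (x i)) ∘ Fin.consEquiv (fun _ => α) =
        fun x => f x.1 * ∏ i, f (x.2 i) := by
      funext x
      simp [Fin.prod_univ_succ]
    rw [← (Fin.consEquiv fun _ => α).hasSum_iff, hcons, pow_succ']
    exact HasSum.mul (f := f) (g := fun x : Fin k → α => ∏ i, f (x i)) hf ih hsummable

theorem tsum_mul_mem_Icc {β : Type*} {g w : β → ℝ} {t C : ℝ} (hg : HasSum g t)
    (hg0 : ∀ x, 0 ≤ g x) (hw : ∀ x, g x ≠ 0 → 1 ≤ w x ∧ w x ≤ C) :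
    ∑' x, g x * w x ∈ Set.Icc t (C * t) := by
  have hbounds : ∀ x, g x ≤ g x * w x ∧ g x * w x ≤ C * g x := fun x => by
    by_cases hx : g x = 0
    · simp [hx]
    · obtain ⟨h1, h2⟩ := hw x hx
      exact ⟨le_mul_of_one_le_right (hg0 x) h1, by nlinarith [hg0 x]⟩
  have hsum : Summable fun x => g x * w x :=
    (hg.summable.mul_left C).of_nonneg_of_le (fun x => (hg0 x).trans (hbounds x).1)
      fun x => (hbounds x).2
  refine ⟨hg.tsum_eq ▸ hg.summable.tsum_le_tsum (fun x => (hbounds x).1) hsum, ?_⟩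
  rw [← hg.tsum_eq, ← tsum_mul_left]
  exact hsum.tsum_le_tsum (fun x => (hbounds x).2) (hg.summable.mul_left C)

noncomputable def poissonWeight (a : ℝ) (n : ℕ) : ℝ := a ^ n / n ! * exp (-a)

theorem poissonWeight_nonneg {a : ℝ} (ha : 0 ≤ a) (n : ℕ) : 0 ≤ poissonWeight a n := by
  unfold poissonWeight
  positivity

theorem hasSum_poissonWeight (a : ℝ) : HasSum (poissonWeight a) 1 := by
  have := (NormedSpace.expSeries_div_hasSum_exp a).mul_right (exp (-a))
  rwa [← exp_eq_exp_ℝ, ← exp_add, add_neg_cancel, exp_zero] at this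

theorem hasSum_indicator_poissonWeight (a : ℝ) (N : ℕ) :
    HasSum ({n | N ≤ n}.indicator (poissonWeight a)) (1 - ∑ n ∈ range N, poissonWeight a n) := by
  have hset : {n | N ≤ n} = (↑(range N) : Set ℕ)ᶜ := by ext; simp
  have hhead : HasSum ((↑(range N) : Set ℕ).indicator (poissonWeight a))
      (∑ n ∈ range N, poissonWeight a n) := by
    rw [← sum_indicator_subset _ subset_rfl]
    exact hasSum_sum_of_ne_finset_zero fun n hn => Set.indicator_of_notMem hn _
  rw [hset, Set.indicator_compl]
  exact (hasSum_poissonWeight a).sub hhead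

theorem sum_range_poissonWeight_le {a : ℝ} (ha : 0 ≤ a) (N : ℕ) :
    ∑ n ∈ range N, poissonWeight a n ≤ exp (N - a / 2) := by
  have hterm : ∀ n ∈ range N, poissonWeight a n ≤ exp N * ((a / 2) ^ n / n !) * exp (-a) := by
    intro n hn
    have h2 : (2 : ℝ) ^ n ≤ exp N := calc
      (2 : ℝ) ^ n ≤ exp 1 ^ n := by gcongr; linarith [add_one_le_exp (1 : ℝ)]
      _ = exp n := exp_one_pow n
      _ ≤ exp N := by gcongr; exact (mem_range.mp hn).le
    calc poissonWeight a n = 2 ^ n * ((a / 2) ^ n / n !) * exp (-a) := by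
          rw [poissonWeight, div_pow]; field_simp
      _ ≤ _ := by gcongr
  calc ∑ n ∈ range N, poissonWeight a n
      ≤ exp N * exp (-a) * ∑ n ∈ range N, (a / 2) ^ n / n ! := by
        rw [mul_sum]
        exact sum_le_sum fun n hn => (hterm n hn).trans_eq (by ring)
    _ ≤ exp N * exp (-a) * exp (a / 2) := by
        gcongr
        exact sum_le_exp_of_nonneg (by positivity) N
    _ = exp (N - a / 2) := by rw [← exp_add, ← exp_add]; ring_nf

theorem tendsto_sum_range_ceil_sqrt_poissonWeight :
    Tendsto (fun a => ∑ n ∈ range ⌈√a⌉₊, poissonWeight a n) atTop (𝓝 0) := by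
  have hexp : Tendsto (fun a : ℝ => exp (2 - a / 4)) atTop (𝓝 0) :=
    tendsto_exp_comp_nhds_zero.mpr <| tendsto_atBot_add_const_left _ 2 <|
      tendsto_neg_atTop_atBot.comp (tendsto_id.atTop_div_const (by norm_num))
  refine squeeze_zero' ?_ ?_ hexp <;> filter_upwards [eventually_ge_atTop 0] with a ha
  · exact sum_nonneg fun n _ => poissonWeight_nonneg ha n
  · refine (sum_range_poissonWeight_le ha _).trans (exp_le_exp.mpr ?_)
    have hceil : (⌈√a⌉₊ : ℝ) < √a + 1 := Nat.ceil_lt_add_one (sqrt_nonneg a)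
    nlinarith [sq_sqrt ha, sq_nonneg (√a - 2)]

theorem le_prod_of_ceil_sqrt_le {m : ℕ} (hm : 2 ≤ m) {a : ℝ} {x : Fin m → ℕ}
    (hx : ∀ i, ⌈√a⌉₊ ≤ x i) : a ≤ ∏ i, (x i : ℝ) := by
  calc a ≤ (⌈√a⌉₊ : ℝ) ^ 2 := (sqrt_le_iff.mp (Nat.le_ceil _)).2
    _ ≤ (⌈√a⌉₊ : ℝ) ^ m := by
      rcases Nat.eq_zero_or_pos ⌈√a⌉₊ with h | h
      · simp [h, zero_pow (by omega : m ≠ 0)]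
      · exact pow_le_pow_right₀ (by exact_mod_cast h) hm
    _ = ∏ _i : Fin m, (⌈√a⌉₊ : ℝ) := by simp
    _ ≤ ∏ i, (x i : ℝ) :=
      prod_le_prod (fun _ _ => by positivity) fun i _ => by exact_mod_cast hx i

theorem indicator_forall_le_eq_prod_poissonWeight {m N : ℕ} {a : ℝ} (b : (Fin m → ℕ) → ℝ)
    (x : Fin m → ℕ) :
    {x : Fin m → ℕ | ∀ i, N ≤ x i}.indicator
        (fun x => (∏ i, a ^ x i / ((x i)! : ℝ)) * exp (b x - a * m)) x =
      (∏ i, {n | N ≤ n}.indicator (poissonWeight a) (x i)) * exp (b x) := by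
  by_cases hx : ∀ i, N ≤ x i
  · rw [Set.indicator_of_mem (s := {x : Fin m → ℕ | ∀ i, N ≤ x i}) hx,
      prod_congr rfl fun i _ => Set.indicator_of_mem (s := {n | N ≤ n}) (hx i) _]
    simp only [poissonWeight, prod_mul_distrib, prod_const, card_univ, Fintype.card_fin,
      ← exp_nat_mul, mul_assoc, ← exp_add]
    ring_nf
  · push Not at hx
    obtain ⟨i, hi⟩ := hx
    rw [Set.indicator_of_notMem (s := {x : Fin m → ℕ | ∀ i, N ≤ x i}) (by simpa using ⟨i, hi⟩),
      prod_eq_zero (mem_univ i) (Set.indicator_of_notMem (s := {n | N ≤ n}) (by simpa using hi) _),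
      zero_mul]

theorem tsum_indicator_forall_ceil_sqrt_le_mem_Icc {m : ℕ} (hm : 2 ≤ m) {ν : ℝ} (hν : ν ≤ 0)
    {a : ℝ} (ha : 0 ≤ a) :
    ∑' x : Fin m → ℕ, {x : Fin m → ℕ | ∀ i, ⌈√a⌉₊ ≤ x i}.indicator
        (fun x => (∏ i, a ^ x i / ((x i)! : ℝ)) * exp (a * exp (ν * ∏ i, (x i : ℝ)) - a * m)) x ∈
      Set.Icc ((1 - ∑ n ∈ range ⌈√a⌉₊, poissonWeight a n) ^ m)
        (exp (a * exp (ν * a)) * (1 - ∑ n ∈ range ⌈√a⌉₊, poissonWeight a n) ^ m) := by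
  have htail_nonneg : 0 ≤ {n | ⌈√a⌉₊ ≤ n}.indicator (poissonWeight a) :=
    Set.indicator_nonneg fun n _ => poissonWeight_nonneg ha n
  simp_rw [indicator_forall_le_eq_prod_poissonWeight]
  refine tsum_mul_mem_Icc (hasSum_prod_fin_of_nonneg (hasSum_indicator_poissonWeight a _)
    htail_nonneg m) (fun x => prod_nonneg fun i _ => htail_nonneg _) fun x hx => ?_
  have hregion : ∀ i, ⌈√a⌉₊ ≤ x i := fun i =>
    Set.mem_of_indicator_ne_zero (prod_ne_zero_iff.mp hx i (mem_univ i))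
  have hprod := le_prod_of_ceil_sqrt_le hm hregion
  refine ⟨one_le_exp (by positivity), exp_le_exp.mpr (mul_le_mul_of_nonneg_left ?_ ha)⟩
  exact exp_le_exp.mpr (mul_le_mul_of_nonpos_left hprod hν)

theorem tendsto_exp_mul_exp_mul_atTop_nhds_one {ν : ℝ} (hν : ν < 0) :
    Tendsto (fun a => exp (a * exp (ν * a))) atTop (𝓝 1) := by
  have h := tendsto_rpow_mul_exp_neg_mul_atTop_nhds_zero 1 (-ν) (by linarith)
  simp only [rpow_one, neg_neg] at h
  simpa [Function.comp_def] using (continuous_exp.tendsto 0).comp h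

/-- The contribution of the region `D₁` (all coordinates at least `⌈√a⌉`)
tends to `1` as `a → ∞`. -/
theorem region_D1_contribution_limit
    (m : ℕ) (hm : 2 ≤ m) (ν : ℝ) (hν : ν < 0) :
    Tendsto (fun a : ℝ =>
        ∑' n : Fin m → ℕ,
          Set.indicator {n : Fin m → ℕ | ∀ i, ⌈Real.sqrt a⌉₊ ≤ n i}
            (fun n => (∏ i, a ^ (n i) / ((n i).factorial : ℝ)) *
              Real.exp (a * Real.exp (ν * ∏ i, (n i : ℝ)) - a * m)) n)
      atTop (nhds 1) := by
  have hlower : Tendsto (fun a => (1 - ∑ n ∈ range ⌈√a⌉₊, poissonWeight a n) ^ m)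
      atTop (𝓝 1) := by
    simpa using ((tendsto_const_nhds (x := (1 : ℝ))).sub
      tendsto_sum_range_ceil_sqrt_poissonWeight).pow m
  have hupper := (tendsto_exp_mul_exp_mul_atTop_nhds_one hν).mul hlower
  rw [mul_one] at hupper
  have hbounds := (eventually_ge_atTop 0).mono fun a ha =>
    tsum_indicator_forall_ceil_sqrt_le_mem_Icc hm hν.le ha
  exact tendsto_of_tendsto_of_tendsto_of_le_of_le' hlower hupper
    (hbounds.mono fun _ h => h.1) (hbounds.mono fun _ h => h.2)
end

section
/- Let m ≥ 2 be an integer and ν < 0. Then lim_{a→∞} Σ_{n∈ℕ^m, n_i ≥ 1 for all i, and n_j < √a for some j} (Π_{i=1}^m a^{n_i}/n_i!) · exp(a·e^{ν·n_1⋯n_m} − a·m) = 0. -/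
/-!
Every `n` in `D₃` has `∏ nᵢ ≥ 1`, so `exp (a e^{ν ∏ nᵢ}) ≤ exp (a e^ν)`, and some coordinate
`n_j < √a`. The latter is handled by a Chernoff bound: for `0 < t ≤ 1` the factor
`t^{n_j - √a} ≥ 1` may be inserted, after which the sum over all `n` factorizes into exponential
series with total `t^{-√a} exp ((m - 1 + t) a)`. Altogether the contribution is at most
`m exp (-(log t) √a + (e^ν - 1 + t) a)`, which tends to `0` once `t < 1 - e^ν`.
-/

open Filter Finset Function Real
open scoped Nat

theorem sum_prod_le_prod_tsum {ι β : Type*} [Fintype ι] {f : ι → β → ℝ}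
    (hf : ∀ i, 0 ≤ f i) (hs : ∀ i, Summable (f i)) (s : Finset (ι → β)) :
    ∑ n ∈ s, ∏ i, f i (n i) ≤ ∏ i, ∑' k, f i k := by
  classical
  calc ∑ n ∈ s, ∏ i, f i (n i)
      ≤ ∑ n ∈ Fintype.piFinset fun i => s.image (· i), ∏ i, f i (n i) :=
        sum_le_sum_of_subset_of_nonneg
          (fun n hn => Fintype.mem_piFinset.2 fun i => mem_image_of_mem _ hn)
          fun n _ _ => prod_nonneg fun i _ => hf i _
    _ = ∏ i, ∑ k ∈ s.image (· i), f i k := (prod_univ_sum _ _).symm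
    _ ≤ ∏ i, ∑' k, f i k :=
        prod_le_prod (fun i _ => sum_nonneg fun k _ => hf i k)
          fun i _ => (hs i).sum_le_tsum _ fun k _ => hf i k

theorem tsum_pow_div_factorial (x : ℝ) : ∑' k : ℕ, x ^ k / k ! = exp x := by
  rw [exp_eq_exp_ℝ]
  exact (NormedSpace.expSeries_div_hasSum_exp x).tsum_eq

section TiltedWeight

variable {ι : Type*} [Fintype ι] [DecidableEq ι]

noncomputable def tiltedWeight (a t : ℝ) (j : ι) (n : ι → ℕ) : ℝ :=
  ∏ i, (update (1 : ι → ℝ) j t i * a) ^ n i / (n i)!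

theorem tiltedWeight_eq (a t : ℝ) (j : ι) (n : ι → ℕ) :
    tiltedWeight a t j n = t ^ n j * ∏ i, a ^ n i / (n i)! := by
  simp_rw [tiltedWeight, mul_pow, mul_div_assoc]
  rw [prod_mul_distrib, Fintype.prod_eq_single j fun i hi => by simp [hi], update_self]

theorem tiltedWeight_nonneg {a t : ℝ} (ha : 0 ≤ a) (ht : 0 ≤ t) (j : ι) (n : ι → ℕ) :
    0 ≤ tiltedWeight a t j n := by
  rw [tiltedWeight_eq]
  exact mul_nonneg (by positivity) (prod_nonneg fun i _ => by positivity)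

theorem prod_pow_div_factorial_le_rpow_neg_mul_tiltedWeight {a t x : ℝ} (ha : 0 ≤ a)
    (ht₀ : 0 < t) (ht₁ : t ≤ 1) {n : ι → ℕ} {j : ι} (hj : (n j : ℝ) ≤ x) :
    ∏ i, a ^ n i / (n i)! ≤ t ^ (-x) * tiltedWeight a t j n := by
  have hweight : 1 ≤ t ^ (-x) * t ^ n j := by
    calc 1 = t ^ (-x) * t ^ x := by
          rw [rpow_neg ht₀.le, inv_mul_cancel₀ (rpow_pos_of_pos ht₀ x).ne']
      _ ≤ t ^ (-x) * t ^ n j := by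
        rw [← rpow_natCast]
        exact mul_le_mul_of_nonneg_left (rpow_le_rpow_of_exponent_ge ht₀ ht₁ hj)
          (rpow_pos_of_pos ht₀ _).le
  rw [tiltedWeight_eq, ← mul_assoc]
  exact le_mul_of_one_le_left (prod_nonneg fun i _ => by positivity) hweight

theorem sum_tiltedWeight_le {a t : ℝ} (ha : 0 ≤ a) (ht : 0 ≤ t) (j : ι)
    (s : Finset (ι → ℕ)) :
    ∑ n ∈ s, tiltedWeight a t j n ≤ exp ((Fintype.card ι - 1 + t) * a) := by
  have hc : ∀ i, 0 ≤ update (1 : ι → ℝ) j t i := fun i => by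
    rcases eq_or_ne i j with rfl | hi <;> simp [*]
  have hcard : ∑ i, update (1 : ι → ℝ) j t i = Fintype.card ι - 1 + t := by
    rw [sum_update_of_mem (mem_univ j), Pi.one_def, sum_const, card_univ_sdiff, card_singleton,
      nsmul_one, Nat.cast_pred (Fintype.card_pos_iff.2 ⟨j⟩)]
    ring
  calc ∑ n ∈ s, tiltedWeight a t j n
      ≤ ∏ i, ∑' k : ℕ, (update (1 : ι → ℝ) j t i * a) ^ k / k ! :=
        sum_prod_le_prod_tsum (fun i k => by have := hc i; positivity)
          (fun i => summable_pow_div_factorial _) s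
    _ = exp ((Fintype.card ι - 1 + t) * a) := by
        simp_rw [tsum_pow_div_factorial, ← exp_sum, ← sum_mul, hcard]

end TiltedWeight

theorem tendsto_mul_sqrt_add_mul_atBot (K : ℝ) {c : ℝ} (hc : c < 0) :
    Tendsto (fun a => K * √a + c * a) atTop atBot := by
  have h : Tendsto (fun a => √a * (K + c * √a)) atTop atBot :=
    tendsto_sqrt_atTop.atTop_mul_atBot₀
      (tendsto_atBot_add_const_left _ K (tendsto_sqrt_atTop.const_mul_atTop_of_neg hc))
  refine h.congr' ?_
  filter_upwards [eventually_ge_atTop 0] with a ha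
  rw [mul_add, mul_left_comm, mul_self_sqrt ha]
  ring

def regionD3 (m : ℕ) (a : ℝ) : Set (Fin m → ℕ) :=
  {n | (∀ i, 1 ≤ n i) ∧ ∃ j, (n j : ℝ) < √a}

noncomputable def seriesTerm (m : ℕ) (ν a : ℝ) (n : Fin m → ℕ) : ℝ :=
  (∏ i, a ^ n i / (n i)!) * exp (a * exp (ν * ∏ i, (n i : ℝ)) - a * m)

theorem seriesTerm_nonneg (m : ℕ) (ν : ℝ) {a : ℝ} (ha : 0 ≤ a) (n : Fin m → ℕ) :
    0 ≤ seriesTerm m ν a n :=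
  mul_nonneg (prod_nonneg fun i _ => by positivity) (exp_pos _).le

theorem indicator_regionD3_seriesTerm_le (m : ℕ) {ν a t : ℝ} (hν : ν ≤ 0) (ha : 0 ≤ a)
    (ht₀ : 0 < t) (ht₁ : t ≤ 1) (n : Fin m → ℕ) :
    (regionD3 m a).indicator (seriesTerm m ν a) n ≤
      exp (a * exp ν - a * m) * t ^ (-√a) * ∑ j, tiltedWeight a t j n := by
  by_cases hn : n ∈ regionD3 m a
  · rw [Set.indicator_of_mem hn, seriesTerm, mul_comm, mul_assoc]
    obtain ⟨hpos, j, hj⟩ := hn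
    have hprod : 1 ≤ ∏ i, (n i : ℝ) := one_le_prod fun i _ => by exact_mod_cast hpos i
    gcongr
    · exact mul_le_of_one_le_right hν hprod
    · calc ∏ i, a ^ n i / (n i)!
          ≤ t ^ (-√a) * tiltedWeight a t j n :=
            prod_pow_div_factorial_le_rpow_neg_mul_tiltedWeight ha ht₀ ht₁ hj.le
        _ ≤ t ^ (-√a) * ∑ j, tiltedWeight a t j n := by
            gcongr
            exact single_le_sum (fun j _ => tiltedWeight_nonneg ha ht₀.le j n) (mem_univ j)
  · rw [Set.indicator_of_notMem hn]
    exact mul_nonneg (by positivity) (sum_nonneg fun j _ => tiltedWeight_nonneg ha ht₀.le j n)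

theorem tsum_indicator_regionD3_seriesTerm_le (m : ℕ) {ν a t : ℝ} (hν : ν ≤ 0) (ha : 0 ≤ a)
    (ht₀ : 0 < t) (ht₁ : t ≤ 1) :
    ∑' n, (regionD3 m a).indicator (seriesTerm m ν a) n ≤
      m * exp (-log t * √a + (exp ν - 1 + t) * a) := by
  refine tsum_le_of_sum_le (fun n => Set.indicator_nonneg (fun n _ => seriesTerm_nonneg m ν ha n) n)
    fun s => ?_
  calc ∑ n ∈ s, (regionD3 m a).indicator (seriesTerm m ν a) n
      ≤ ∑ n ∈ s, exp (a * exp ν - a * m) * t ^ (-√a) * ∑ j, tiltedWeight a t j n :=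
        sum_le_sum fun n _ => indicator_regionD3_seriesTerm_le m hν ha ht₀ ht₁ n
    _ = exp (a * exp ν - a * m) * t ^ (-√a) * ∑ j, ∑ n ∈ s, tiltedWeight a t j n := by
        rw [← mul_sum, sum_comm]
    _ ≤ exp (a * exp ν - a * m) * t ^ (-√a) * ∑ _j : Fin m, exp ((m - 1 + t) * a) := by
        gcongr with j
        simpa using sum_tiltedWeight_le ha ht₀.le j s
    _ = m * exp (-log t * √a + (exp ν - 1 + t) * a) := by
        rw [sum_const, card_univ, Fintype.card_fin, nsmul_eq_mul, rpow_def_of_pos ht₀,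
          mul_left_comm, ← exp_add, ← exp_add]
        ring_nf

theorem region_D3_contribution_limit_general
    (m : ℕ) (ν : ℝ) (hν : ν < 0) :
    Tendsto (fun a : ℝ =>
        ∑' n : Fin m → ℕ,
          Set.indicator
            {n : Fin m → ℕ | (∀ i, 1 ≤ n i) ∧ ∃ j, (n j : ℝ) < Real.sqrt a}
            (fun n => (∏ i, a ^ (n i) / ((n i).factorial : ℝ)) *
              Real.exp (a * Real.exp (ν * ∏ i, (n i : ℝ)) - a * m)) n)
      atTop (nhds 0) := by
  change Tendsto (fun a => ∑' n, (regionD3 m a).indicator (seriesTerm m ν a) n) atTop (nhds 0)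
  have hexp : exp ν < 1 := exp_lt_one_iff.2 hν
  obtain ⟨t, ht₀, hc⟩ : ∃ t, 0 < t ∧ exp ν - 1 + t < 0 :=
    ⟨(1 - exp ν) / 2, by linarith, by linarith⟩
  have ht₁ : t ≤ 1 := by linarith [exp_pos ν]
  have hbound : Tendsto (fun a => m * exp (-log t * √a + (exp ν - 1 + t) * a)) atTop (nhds 0) := by
    simpa using (tendsto_exp_atBot.comp
      (tendsto_mul_sqrt_add_mul_atBot (-log t) hc)).const_mul (m : ℝ)
  refine tendsto_of_tendsto_of_tendsto_of_le_of_le' tendsto_const_nhds hbound ?_ ?_ <;>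
    filter_upwards [eventually_ge_atTop 0] with a ha
  · exact tsum_nonneg fun n => Set.indicator_nonneg (fun n _ => seriesTerm_nonneg m ν ha n) n
  · exact tsum_indicator_regionD3_seriesTerm_le m hν.le ha ht₀ ht₁

/-- The contribution of the region `D₃` (all coordinates positive, at least one
coordinate smaller than `√a`) tends to `0` as `a → ∞`. -/
theorem region_D3_contribution_limit
    (m : ℕ) (hm : 2 ≤ m) (ν : ℝ) (hν : ν < 0) :
    Tendsto (fun a : ℝ =>
        ∑' n : Fin m → ℕ,
          Set.indicator
            {n : Fin m → ℕ | (∀ i, 1 ≤ n i) ∧ ∃ j, (n j : ℝ) < Real.sqrt a}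
            (fun n => (∏ i, a ^ (n i) / ((n i).factorial : ℝ)) *
              Real.exp (a * Real.exp (ν * ∏ i, (n i : ℝ)) - a * m)) n)
      atTop (nhds 0) :=
  region_D3_contribution_limit_general m ν hν
end

section
/- Let α be a type, d ∈ ℕ, G : Finset α → ℝ^d a function, ν ∈ ℝ^d, and c > 0; define p(x) = c·exp(ν · G(x)) for finite sets x, where · is the inner product on ℝ^d. Define the difference operator componentwise by D_y G(x) = G(x ∪ {y}) − G(x), and iteratively D^n_{y_1,…,y_n} G = D_{y_1} (D^{n−1}_{y_2,…,y_n} G). Let m ≥ 1, let x be a finite subset of α, and let y_1,…,y_m ∉ x be pairwise distinct. Then p(x ∪ {y_1,…,y_m}) / p(x) = exp(ν · Q_m G(x)), where Q_m G(x) = Σ_{∅ ≠ J ⊆ {1,…,m}} D^{|J|}_{(y_j)_{j∈J}} G(x), i.e. the sum of the m-th order difference D^m_{y_1,…,y_m} G(x), all (m−1)-st order differences over (m−1)-element subsets of {y_1,…,y_m}, down to all first-order differences D_{y_i} G(x). -/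
/-- Iterated difference operator: `iterD F [y₁,…,yₙ] x = D^n_{y₁,…,yₙ} F (x)`, where
`D_y F (x) = F (x ∪ {y}) - F x` and `D^n_{y₁,…,yₙ} F = D_{y₁}(D^{n-1}_{y₂,…,yₙ} F)`. -/
noncomputable def iterD {α : Type*} [DecidableEq α] (F : Finset α → ℝ) :
    List α → Finset α → ℝ
  | [], x => F x
  | y :: ys, x => iterD F ys (insert y x) - iterD F ys x

/-!
An iterated difference along distinct points `y₁,…,yₙ` is the inclusion–exclusion sum
`∑_{K ⊆ {y₁,…,yₙ}} (-1)^(n-|K|) G(x ∪ K)`, so it depends only on the set of points. Summing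
these over all subsets `J` of `Y = {y₁,…,yₘ}` is Möbius inversion on the Boolean lattice and
gives `G(x ∪ Y)`; removing the `J = ∅` term `G(x)` leaves `G(x ∪ Y) - G(x)`, coordinatewise.
Multiplying by `ν` and exponentiating, the constant `c` cancels in `p(x ∪ Y) / p(x)`.
-/

section DiffOp

open Finset

variable {α : Type*} [DecidableEq α] (F : Finset α → ℝ)

noncomputable def diffOp (J x : Finset α) : ℝ :=
  ∑ K ∈ J.powerset, (-1 : ℝ) ^ (#J - #K) * F (x ∪ K)

lemma diffOp_insert {a : α} {J : Finset α} (ha : a ∉ J) (x : Finset α) :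
    diffOp F (insert a J) x = diffOp F J (insert a x) - diffOp F J x := by
  have hJ : #(insert a J) = #J + 1 := card_insert_of_notMem ha
  have without_a : ∀ K ∈ J.powerset, (-1 : ℝ) ^ (#(insert a J) - #K) * F (x ∪ K) =
      -((-1 : ℝ) ^ (#J - #K) * F (x ∪ K)) := by
    intro K hK
    have : #K ≤ #J := card_le_card (mem_powerset.1 hK)
    rw [hJ, show #J + 1 - #K = #J - #K + 1 by omega, pow_succ]
    ring
  have with_a : ∀ K ∈ J.powerset,
      (-1 : ℝ) ^ (#(insert a J) - #(insert a K)) * F (x ∪ insert a K) =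
        (-1 : ℝ) ^ (#J - #K) * F (insert a x ∪ K) := by
    intro K hK
    rw [hJ, card_insert_of_notMem (notMem_of_mem_powerset_of_notMem hK ha),
      Nat.add_sub_add_right, union_insert, insert_union]
  rw [diffOp, sum_powerset_insert ha, sum_congr rfl without_a, sum_congr rfl with_a,
    sum_neg_distrib, diffOp, diffOp]
  ring

lemma iterD_eq_diffOp {l : List α} (hl : l.Nodup) (x : Finset α) :
    iterD F l x = diffOp F l.toFinset x := by
  induction l generalizing x with
  | nil => simp [iterD, diffOp]
  | cons a l ih =>
    rw [List.nodup_cons] at hl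
    rw [List.toFinset_cons, diffOp_insert F (by simpa using hl.1), iterD, ih hl.2, ih hl.2]

lemma sum_powerset_diffOp (T x : Finset α) : ∑ J ∈ T.powerset, diffOp F J x = F (x ∪ T) := by
  induction T using Finset.induction_on generalizing x with
  | empty => simp [diffOp]
  | insert a T ha ih =>
    rw [sum_powerset_insert ha,
      sum_congr rfl fun J hJ => diffOp_insert F (notMem_of_mem_powerset_of_notMem hJ ha) x,
      sum_sub_distrib, ih, ih, insert_union, union_insert]
    ring

lemma sum_nonempty_iterD {ι : Type*} [LinearOrder ι] {s : Finset ι} {y : ι → α}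
    (hy : Set.InjOn y s) (x : Finset α) :
    ∑ J ∈ s.powerset.filter (fun J => J.Nonempty), iterD F ((J.sort (· ≤ ·)).map y) x =
      F (x ∪ s.image y) - F x := by
  have iterD_sort : ∀ J ∈ s.powerset,
      iterD F ((J.sort (· ≤ ·)).map y) x = diffOp F (J.image y) x := by
    intro J hJ
    have hyJ : Set.InjOn y J := hy.mono (mem_powerset.1 hJ)
    rw [iterD_eq_diffOp F ((sort_nodup J _).map_on fun a ha b hb =>
      hyJ (by simpa using ha) (by simpa using hb))]
    congr 1
    ext
    simp
  have total : ∑ J ∈ s.powerset, iterD F ((J.sort (· ≤ ·)).map y) x = F (x ∪ s.image y) := by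
    rw [sum_congr rfl iterD_sort, ← sum_powerset_diffOp F, powerset_image,
      sum_image (image_injOn_powerset_of_injOn hy)]
  simp_rw [nonempty_iff_ne_empty]
  rw [filter_ne', sum_erase_eq_sub (empty_mem_powerset s), total]
  simp [iterD]

end DiffOp

theorem conditional_intensity_exponential_form_general
    {α : Type*} [DecidableEq α] (d : ℕ) (G : Finset α → Fin d → ℝ)
    (ν : Fin d → ℝ) (c : ℝ) (hc : 0 < c) (p : Finset α → ℝ)
    (hp : ∀ s, p s = c * Real.exp (∑ i, ν i * G s i))
    (m : ℕ) (x : Finset α) (y : Fin m → α)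
    (hy : Function.Injective y) :
    p (x ∪ Finset.image y Finset.univ) / p x =
      Real.exp (∑ i, ν i *
        ∑ J ∈ Finset.univ.powerset.filter (fun J : Finset (Fin m) => J.Nonempty),
          iterD (fun s => G s i) ((J.sort (· ≤ ·)).map y) x) := by
  have increment : ∀ i, ∑ J ∈ Finset.univ.powerset.filter (fun J : Finset (Fin m) => J.Nonempty),
      iterD (fun s => G s i) ((J.sort (· ≤ ·)).map y) x =
        G (x ∪ Finset.image y Finset.univ) i - G x i :=
    fun i => sum_nonempty_iterD (fun s => G s i) hy.injOn x
  simp_rw [increment, mul_sub, Finset.sum_sub_distrib, Real.exp_sub, hp]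
  field_simp

/-- Proposition 1 of the paper: for the exponential-family density
`p(x) = c·exp(ν·G(x))`, the `m`-th order conditional intensity
`p(x ∪ {y₁,…,yₘ})/p(x)` equals `exp(ν · Q_m G(x))` where `Q_m G(x)` is the sum of all
iterated differences of `G` over nonempty subsets of `{y₁,…,yₘ}`. -/
theorem conditional_intensity_exponential_form
    {α : Type*} [DecidableEq α] (d : ℕ) (G : Finset α → Fin d → ℝ)
    (ν : Fin d → ℝ) (c : ℝ) (hc : 0 < c) (p : Finset α → ℝ)
    (hp : ∀ s, p s = c * Real.exp (∑ i, ν i * G s i))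
    (m : ℕ) (hm : 1 ≤ m) (x : Finset α) (y : Fin m → α)
    (hy : Function.Injective y) (hyx : ∀ j, y j ∉ x) :
    p (x ∪ Finset.image y Finset.univ) / p x =
      Real.exp (∑ i, ν i *
        ∑ J ∈ Finset.univ.powerset.filter (fun J : Finset (Fin m) => J.Nonempty),
          iterD (fun s => G s i) ((J.sort (· ≤ ·)).map y) x) :=
  conditional_intensity_exponential_form_general d G ν c hc p hp m x y hy
end

section
/- Let d ≥ 2 and 2 ≤ k ≤ d be integers and ν ≤ 0. For a finite set x of compact subsets of ℝ^d define G_k(x) = Σ H^{d−k}(x_1 ∩ ⋯ ∩ x_k), the sum over all k-element subsets {x_1,…,x_k} of x, where H^{d−k} denotes (d−k)-dimensional Hausdorff measure; assume all the Hausdorff measures H^{d−k}(x_1 ∩ ⋯ ∩ x_k) appearing below are finite. For a compact set y ∉ x define the conditional intensity λ*(y; x) = exp(ν · (G_k(x ∪ {y}) − G_k(x))). Then for any finite sets x₂ ⊆ x₁ of compact subsets of ℝ^d and any compact y ∉ x₁, one has λ*(y; x₁) ≤ λ*(y; x₂); equivalently, 0 ≤ G_k(x₂ ∪ {y}) − G_k(x₂)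 ≤ G_k(x₁ ∪ {y}) − G_k(x₁). -/
open MeasureTheory Finset

/-!
Adding `y` to `x` adds to `G_k` exactly the terms `H^{d-k}(y ∩ ⋂ s)` over `(k-1)`-subsets `s`
of `x`. These terms are nonnegative, and enlarging `x` only adds more of them, so the increment
`G_k(x ∪ {y}) - G_k(x)` is nonnegative and monotone in `x`; multiplying by `ν ≤ 0` reverses the
order and `exp` preserves it.
-/

namespace Finset

variable {α β : Type*} [DecidableEq α] [AddCommGroup β]

lemma sum_powerset_insert_sub {y : α} {x : Finset α} (hy : y ∉ x) (f : Finset α → β) :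
    ∑ t ∈ (insert y x).powerset, f t - ∑ t ∈ x.powerset, f t =
      ∑ t ∈ x.powerset, f (insert y t) := by
  rw [sum_powerset_insert hy, add_sub_cancel_left]

variable [PartialOrder β] [IsOrderedAddMonoid β] {f : Finset α → β}

lemma sum_powerset_insert_sub_nonneg (hf : 0 ≤ f) {y : α} {x : Finset α} (hy : y ∉ x) :
    0 ≤ ∑ t ∈ (insert y x).powerset, f t - ∑ t ∈ x.powerset, f t := by
  rw [sum_powerset_insert_sub hy]
  exact sum_nonneg fun t _ => hf _

lemma sum_powerset_insert_sub_mono (hf : 0 ≤ f) {y : α} {x₁ x₂ : Finset α} (hx : x₂ ⊆ x₁)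
    (hy : y ∉ x₁) :
    ∑ t ∈ (insert y x₂).powerset, f t - ∑ t ∈ x₂.powerset, f t ≤
      ∑ t ∈ (insert y x₁).powerset, f t - ∑ t ∈ x₁.powerset, f t := by
  rw [sum_powerset_insert_sub hy, sum_powerset_insert_sub fun h => hy (hx h)]
  exact sum_le_sum_of_subset_of_nonneg (powerset_mono.2 hx) fun t _ _ => hf _

end Finset

theorem facet_process_repulsive_general
    (d k : ℕ) (ν : ℝ) (hν : ν ≤ 0)
    [DecidableEq (Set (EuclideanSpace ℝ (Fin d)))]
    (G : Finset (Set (EuclideanSpace ℝ (Fin d))) → ℝ)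
    (hG : ∀ x, G x =
      ∑ s ∈ x.powerset.filter (fun s => s.card = k),
        (μH[((d : ℝ) - k)] (⋂₀ (s : Set (Set (EuclideanSpace ℝ (Fin d)))))).toReal)
    (x₁ x₂ : Finset (Set (EuclideanSpace ℝ (Fin d)))) (hx : x₂ ⊆ x₁)
    (y : Set (EuclideanSpace ℝ (Fin d))) (hy : y ∉ x₁) :
    Real.exp (ν * (G (insert y x₁) - G x₁)) ≤ Real.exp (ν * (G (insert y x₂) - G x₂)) ∧
      0 ≤ G (insert y x₂) - G x₂ ∧
        G (insert y x₂) - G x₂ ≤ G (insert y x₁) - G x₁ := by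
  -- Summing over the whole powerset, with `g` vanishing off `k`-sets, lets the lemmas above apply.
  set g : Finset (Set (EuclideanSpace ℝ (Fin d))) → ℝ := fun s =>
    if s.card = k then (μH[((d : ℝ) - k)] (⋂₀ (s : Set (Set (EuclideanSpace ℝ (Fin d)))))).toReal
    else 0
  have hG_powerset : ∀ x, G x = ∑ s ∈ x.powerset, g s := fun x => by rw [hG, sum_filter]
  have hg : 0 ≤ g := fun s => by dsimp only [g]; split_ifs <;> simp
  have hmono : G (insert y x₂) - G x₂ ≤ G (insert y x₁) - G x₁ := by
    simpa only [hG_powerset] using sum_powerset_insert_sub_mono hg hx hy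
  have hnonneg : 0 ≤ G (insert y x₂) - G x₂ := by
    simpa only [hG_powerset] using sum_powerset_insert_sub_nonneg hg fun h => hy (hx h)
  exact ⟨Real.exp_le_exp.2 (mul_le_mul_of_nonpos_left hmono hν), hnonneg, hmono⟩

/-- Proposition 2 of the paper, repulsiveness: for the facet submodel of order
`k` with `G_k(x) = Σ_{k-subsets s of x} H^{d-k}(⋂ s)` and `ν ≤ 0`, the conditional intensity
`λ*(y;x) = exp(ν(G_k(x∪{y}) - G_k(x)))` satisfies `λ*(y;x₁) ≤ λ*(y;x₂)` whenever `x₂ ⊆ x₁`;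
equivalently `0 ≤ G_k(x₂∪{y}) - G_k(x₂) ≤ G_k(x₁∪{y}) - G_k(x₁)`. -/
theorem facet_process_repulsive
    (d k : ℕ) (hd : 2 ≤ d) (hk1 : 2 ≤ k) (hk2 : k ≤ d) (ν : ℝ) (hν : ν ≤ 0)
    [DecidableEq (Set (EuclideanSpace ℝ (Fin d)))]
    (G : Finset (Set (EuclideanSpace ℝ (Fin d))) → ℝ)
    (hG : ∀ x, G x =
      ∑ s ∈ x.powerset.filter (fun s => s.card = k),
        (μH[((d : ℝ) - k)] (⋂₀ (s : Set (Set (EuclideanSpace ℝ (Fin d)))))).toReal)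
    (x₁ x₂ : Finset (Set (EuclideanSpace ℝ (Fin d)))) (hx : x₂ ⊆ x₁)
    (y : Set (EuclideanSpace ℝ (Fin d))) (hy : y ∉ x₁)
    (hcpt : ∀ A ∈ insert y x₁, IsCompact A)
    (hfin : ∀ s ∈ (insert y x₁).powerset, s.card = k →
      μH[((d : ℝ) - k)] (⋂₀ (s : Set (Set (EuclideanSpace ℝ (Fin d))))) ≠ ⊤) :
    Real.exp (ν * (G (insert y x₁) - G x₁)) ≤ Real.exp (ν * (G (insert y x₂) - G x₂)) ∧
      0 ≤ G (insert y x₂) - G x₂ ∧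
        G (insert y x₂) - G x₂ ≤ G (insert y x₁) - G x₁ :=
  facet_process_repulsive_general d k ν hν G hG x₁ x₂ hx y hy
end
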